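/- Let p_n ∈ ℤ[z] be defined by p_0 = 0 and p_{n+1} = p_n^2 + z, and for ℓ, n ∈ ℕ set q_{ℓ,n} = p_{ℓ+n} − p_ℓ. For every ℓ ≥ 2, every n ≥ 1, every divisor k of n, every j with 2 ≤ j ≤ ℓ, and every r ∈ mis(j,k), the point r is a simple root of q_{ℓ,n} (i.e. a root of multiplicity exactly 1). Moreover, every complex root of q_{ℓ,n} lies either in some hyp(k) with k | n or in some mis(j,k) with 2 ≤ j ≤ ℓ and k | n. -/
import Mathlib


open Polynomial

/-- The polynomials `p n` defined by `p 0 = 0`, `p (n+1) = p n ^ 2 + X`. -/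
noncomputable def P : ℕ → Polynomial ℤ
  | 0 => 0
  | n + 1 => P n ^ 2 + X

/-- The Misiurewicz–Thurston polynomials `q l n = p (l + n) - p l`. -/
noncomputable def Q (l n : ℕ) : Polynomial ℤ := P (l + n) - P l

/-- `p n` viewed over `ℂ`. -/
noncomputable def pC (n : ℕ) : Polynomial ℂ := (P n).map (Int.castRingHom ℂ)

/-- `q l n` viewed over `ℂ`. -/
noncomputable def qC (l n : ℕ) : Polynomial ℂ := (Q l n).map (Int.castRingHom ℂ)

/-- Hyperbolic centers of order `n`: roots of `p n` that are not roots of `p k`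
for any strict divisor `k` of `n`. -/
def hyp (n : ℕ) : Set ℂ :=
  {z | (pC n).eval z = 0 ∧ ∀ k : ℕ, k ∣ n → k ≠ n → (pC k).eval z ≠ 0}

/-- Misiurewicz points of type `(l, n)`. -/
def mis (l n : ℕ) : Set ℂ :=
  {z | (qC l n).eval z = 0 ∧ (qC (l - 1) n).eval z ≠ 0 ∧
    ∀ k : ℕ, k ∣ n → k ≠ n → (qC l k).eval z ≠ 0}

/-- Gleason's polynomial `h n = ∏_{r ∈ hyp n} (X - r)`. -/
noncomputable def hPoly (n : ℕ) : Polynomial ℂ := ∏ᶠ r ∈ hyp n, (X - C r)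

/-- Reduced Misiurewicz polynomial `m l n = ∏_{r ∈ mis l n} (X - r)`. -/
noncomputable def mPoly (l n : ℕ) : Polynomial ℂ := ∏ᶠ r ∈ mis l n, (X - C r)

/-- The multiplicity `η l k = ⌊(l - 1)/k⌋ + 2`, with the conventions
`η 0 k = 1` (floor taken in `ℤ`) and `η 1 k = 2`. -/
def eta (l k : ℕ) : ℕ := if l = 0 then 1 else (l - 1) / k + 2

lemma P_zero : P 0 = 0 := rfl
lemma P_succ (n : ℕ) : P (n + 1) = P n ^ 2 + X := rfl

lemma pC_zero : pC 0 = 0 := by simp [pC, P_zero]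
lemma pC_succ (n : ℕ) : pC (n + 1) = pC n ^ 2 + X := by
  simp [pC, P_succ, Polynomial.map_add, Polynomial.map_pow]

lemma qC_eq (l n : ℕ) : qC l n = pC (l + n) - pC l := by
  simp [qC, pC, Q, Polynomial.map_sub]

/-- the critical orbit -/
noncomputable def av (r : ℂ) (i : ℕ) : ℂ := (pC i).eval r

lemma av_zero (r : ℂ) : av r 0 = 0 := by simp [av, pC_zero]
lemma av_step (r : ℂ) (i : ℕ) : av r (i + 1) = av r i ^ 2 + r := by
  simp [av, pC_succ]

lemma qC_eval (l n : ℕ) (r : ℂ) : (qC l n).eval r = av r (l + n) - av r l := by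
  simp [qC_eq, av]

lemma aeval_eq_eval_map (r : ℂ) (g : Polynomial ℤ) :
    (Polynomial.aeval r) g = (g.map (Int.castRingHom ℂ)).eval r := by
  rw [eval_map, aeval_def, algebraMap_int_eq]

/-- degree and monicity of `P n` -/
lemma P_monic : ∀ n : ℕ, 1 ≤ n → Monic (P n) ∧ (P n).degree = ((2 ^ (n - 1) : ℕ) : WithBot ℕ) := by
  intro n hn
  induction n with
  | zero => omega
  | succ m ih =>
    rcases Nat.eq_zero_or_pos m with hm | hm
    · subst hm
      constructor
      · simpa [P_succ, P_zero] using monic_X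
      · simp [P_succ, P_zero]
    · obtain ⟨hmon, hdeg⟩ := ih hm
      have hdegsq : (P m ^ 2).degree = ((2 ^ m : ℕ) : WithBot ℕ) := by
        rw [degree_pow, hdeg, two_nsmul, ← Nat.cast_add]
        norm_cast
        obtain ⟨m', rfl⟩ : ∃ m', m = m' + 1 := ⟨m - 1, by omega⟩
        simp [pow_succ, two_mul]
        omega
      have hlt : degree (X : Polynomial ℤ) < (P m ^ 2).degree := by
        rw [hdegsq, degree_X]
        exact_mod_cast Nat.one_lt_two_pow_iff.mpr (by omega)
      constructor
      · rw [P_succ]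
        exact (hmon.pow 2).add_of_left hlt
      · rw [P_succ, degree_add_eq_left_of_degree_lt hlt, hdegsq]
        norm_num

lemma Q_monic (l n : ℕ) (hn : 1 ≤ n) : Monic (Q l n) := by
  obtain ⟨hmon, hdeg⟩ := P_monic (l + n) (by omega)
  rcases Nat.eq_zero_or_pos l with hl | hl
  · subst hl
    simpa [Q, P_zero] using hmon
  · obtain ⟨_, hdegl⟩ := P_monic l hl
    refine hmon.sub_of_left ?_
    rw [hdeg, hdegl, Nat.cast_lt]
    exact Nat.pow_lt_pow_right one_lt_two (by omega)

lemma qC_monic (l n : ℕ) (hn : 1 ≤ n) : Monic (qC l n) :=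
  (Q_monic l n hn).map _

lemma qC_ne_zero (l n : ℕ) (hn : 1 ≤ n) : qC l n ≠ 0 :=
  (qC_monic l n hn).ne_zero

/-- derivative recursion -/
lemma derivP_succ (m : ℕ) :
    derivative (P (m + 1)) = 2 * (P m * derivative (P m)) + 1 := by
  rw [P_succ]
  rw [derivative_add, derivative_pow, derivative_X, Nat.cast_ofNat, map_ofNat]
  ring

lemma derivP_odd (i : ℕ) (hi : 1 ≤ i) :
    ∃ E : Polynomial ℤ, derivative (P i) = 1 + 2 * E := by
  obtain ⟨m, rfl⟩ : ∃ m, i = m + 1 := ⟨i - 1, by omega⟩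
  exact ⟨P m * derivative (P m), by rw [derivP_succ]; ring⟩

/-- mod 2 congruence -/
lemma P_add_cong (s : ℕ) : ∀ i : ℕ, ∃ E : Polynomial ℤ,
    P (i + s) = P i + (P s) ^ (2 ^ i) + 2 * E := by
  intro i
  induction i with
  | zero => exact ⟨0, by simp [P_zero]⟩
  | succ i ih =>
    obtain ⟨E, hE⟩ := ih
    refine ⟨P i * (P s) ^ (2 ^ i) + 2 * E ^ 2 + 2 * (P i) * E + 2 * (P s) ^ (2 ^ i) * E, ?_⟩
    have h1 : i + 1 + s = (i + s) + 1 := by ring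
    have hpow : ((P s) ^ (2 ^ i)) ^ 2 = (P s) ^ (2 ^ (i + 1)) := by
      rw [← pow_mul, ← pow_succ]
    rw [h1, P_succ, hE, P_succ, ← hpow]
    ring

/-- factorization -/
lemma Q_fact (n : ℕ) : ∀ l : ℕ, Q l n = P n * ∏ i ∈ Finset.range l, (P (i + n) + P i) := by
  intro l
  induction l with
  | zero => simp [Q, P_zero]
  | succ l ih =>
    have h1 : Q (l + 1) n = Q l n * (P (l + n) + P l) := by
      have h2 : l + 1 + n = (l + n) + 1 := by ring
      rw [Q, Q, h2, P_succ, P_succ]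
      ring
    rw [h1, ih, Finset.prod_range_succ]
    ring

lemma qC_fact (l n : ℕ) :
    qC l n = pC n * ∏ i ∈ Finset.range l, (pC (i + n) + pC i) := by
  have h := congrArg (Polynomial.map (Int.castRingHom ℂ)) (Q_fact n l)
  rw [Polynomial.map_mul, Polynomial.map_prod] at h
  simp only [Polynomial.map_add] at h
  exact h

section seq

variable {a : ℕ → ℂ} {r : ℂ}

lemma seq_propagate (hstep : ∀ i, a (i + 1) = a i ^ 2 + r) {m s : ℕ}
    (h : a (m + s) = a m) : ∀ i, m ≤ i → a (i + s) = a i := by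
  intro i hi
  induction i, hi using Nat.le_induction with
  | base => exact h
  | succ i hi ih =>
    have h1 : i + 1 + s = (i + s) + 1 := by ring
    rw [h1, hstep, ih, hstep]

lemma seq_iter {m s : ℕ} (h : ∀ i, m ≤ i → a (i + s) = a i) :
    ∀ c i, m ≤ i → a (i + c * s) = a i := by
  intro c
  induction c with
  | zero => simp
  | succ c ih =>
    intro i hi
    have h1 : i + (c + 1) * s = (i + c * s) + s := by ring
    rw [h1, h _ (by omega : m ≤ i + c * s), ih i hi]

lemma seq_pull {u w s nn : ℕ} (hnn : 0 < nn)
    (h1 : ∀ i, u ≤ i → a (i + s) = a i)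
    (h2 : ∀ i, w ≤ i → a (i + nn) = a i) :
    ∀ i, w ≤ i → a (i + s) = a i := by
  intro i hi
  have hM : u ≤ i + u * nn := by
    have := Nat.le_mul_of_pos_right u hnn
    omega
  calc a (i + s) = a (i + s + u * nn) := (seq_iter h2 u _ (by omega)).symm
    _ = a (i + u * nn + s) := by rw [show i + s + u * nn = i + u * nn + s from by ring]
    _ = a (i + u * nn) := h1 _ hM
    _ = a i := seq_iter h2 u i hi

end seq

/-- if `r` is integral over `ℤ` then `1/2` is not in `ℤ[r]` -/
lemma half_notMem (r : ℂ) (hrint : IsIntegral ℤ r) (u : Polynomial ℤ)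
    (h : (2 : ℂ) * (Polynomial.aeval r) u = 1) : False := by
  have hmem : (Polynomial.aeval r) u ∈ Algebra.adjoin ℤ ({r} : Set ℂ) :=
    Polynomial.aeval_mem_adjoin_singleton ℤ r
  have hint : IsIntegral ℤ ((Polynomial.aeval r) u) :=
    adjoin_le_integralClosure hrint hmem
  have hv2 : (Polynomial.aeval r) u = ((1/2 : ℚ) : ℂ) := by
    push_cast
    field_simp
    linear_combination h
  rw [hv2] at hint
  have heq : ((1/2 : ℚ) : ℂ) = algebraMap ℚ ℂ (1/2) := rfl
  rw [heq] at hint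
  have hint2 := (isIntegral_algebraMap_iff ((algebraMap ℚ ℂ).injective)).mp hint
  obtain ⟨y, hy⟩ := IsIntegrallyClosed.isIntegral_iff.mp hint2
  have hy2 : (2 : ℚ) * (y : ℚ) = 1 := by
    have : (y : ℚ) = 1/2 := by exact_mod_cast hy
    rw [this]; norm_num
  have : (2 * y : ℤ) = 1 := by exact_mod_cast hy2
  omega

/-- The key transversality lemma, proved by a characteristic-2 argument. -/
lemma deriv_factor_ne_zero {r : ℂ} (l n t : ℕ)
    (hrint : IsIntegral ℤ r)
    (hrel : (Polynomial.aeval r) (P (l + n)) = (Polynomial.aeval r) (P l)) :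
    (Polynomial.aeval r) (derivative (P (t + 1 + n)) + derivative (P (t + 1))) ≠ 0 := by
  intro h0
  set Cp : Polynomial ℤ := P (t + n) * derivative (P (t + n)) + P t * derivative (P t) with hCp
  have hD : derivative (P (t + 1 + n)) + derivative (P (t + 1)) = 2 * (1 + Cp) := by
    rw [show t + 1 + n = (t + n) + 1 from by ring, derivP_succ, derivP_succ, hCp]
    ring
  rw [hD, map_mul] at h0
  have hC0 : (Polynomial.aeval r) (1 + Cp) = 0 := by
    rcases mul_eq_zero.mp h0 with h | h
    · exfalso
      rw [map_ofNat] at h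
      norm_num at h
    · exact h
  -- the ideal generated by 2 and the kernel of evaluation at r
  set K : Ideal (Polynomial ℤ) := RingHom.ker (Polynomial.aeval r).toRingHom with hK
  set J : Ideal (Polynomial ℤ) := Ideal.span {(2 : Polynomial ℤ)} ⊔ K with hJ
  have hJne : J ≠ ⊤ := by
    intro htop
    have h1 : (1 : Polynomial ℤ) ∈ J := htop ▸ Submodule.mem_top
    rw [hJ] at h1
    obtain ⟨y, hy, z, hz, hyz⟩ := Submodule.mem_sup.mp h1
    obtain ⟨u, rfl⟩ := Ideal.mem_span_singleton.mp hy
    have hz0 : (Polynomial.aeval r) z = 0 := hz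
    have : (2 : ℂ) * (Polynomial.aeval r) u = 1 := by
      have := congrArg (Polynomial.aeval r) hyz
      rw [map_add, map_mul, map_one, hz0, add_zero, map_ofNat] at this
      exact this
    exact half_notMem r hrint u this
  obtain ⟨m, hmax, hm⟩ := Ideal.exists_le_maximal J hJne
  letI := hmax
  letI : Field (Polynomial ℤ ⧸ m) := Ideal.Quotient.field m
  set χ : Polynomial ℤ →+* (Polynomial ℤ ⧸ m) := Ideal.Quotient.mk m with hχ
  have hχ2 : χ 2 = 0 := by
    rw [Ideal.Quotient.eq_zero_iff_mem]
    exact hm (le_sup_left (α := Ideal (Polynomial ℤ)) (Ideal.mem_span_singleton_self _))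
  have hk2 : (2 : Polynomial ℤ ⧸ m) = 0 := by
    have := hχ2
    rwa [map_ofNat] at this
  have hχ0 : ∀ g : Polynomial ℤ, (Polynomial.aeval r) g = 0 → χ g = 0 := by
    intro g hg
    rw [Ideal.Quotient.eq_zero_iff_mem]
    exact hm (le_sup_right (α := Ideal (Polynomial ℤ)) (hg : g ∈ K))
  have hPn : χ (P n) = 0 := by
    have h1 : χ (P (l + n)) = χ (P l) := by
      have hz : (Polynomial.aeval r) (P (l + n) - P l) = 0 := by
        rw [map_sub, hrel, sub_self]
      have := hχ0 _ hz
      rwa [map_sub, sub_eq_zero] at this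
    obtain ⟨E, hE⟩ := P_add_cong n l
    have h2 := congrArg χ hE
    rw [map_add, map_add, map_mul, hχ2, zero_mul, add_zero, h1, map_pow] at h2
    have h3 : χ (P n) ^ (2 ^ l) = 0 := by
      have := h2.symm
      rwa [add_eq_left] at this
    exact pow_eq_zero_iff (by positivity) |>.mp h3
  have hPtn : χ (P (t + n)) = χ (P t) := by
    obtain ⟨E, hE⟩ := P_add_cong n t
    have h2 := congrArg χ hE
    rw [map_add, map_add, map_mul, hχ2, zero_mul, add_zero, map_pow, hPn,
      zero_pow (by positivity), add_zero] at h2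
    exact h2
  have hCp0 : χ Cp = 0 := by
    rcases Nat.eq_zero_or_pos t with ht | ht
    · subst ht
      rw [hCp]
      simp only [Nat.zero_add, P_zero, zero_mul, add_zero, map_mul]
      rw [hPn, zero_mul]
    · obtain ⟨E1, h1⟩ := derivP_odd (t + n) (by omega)
      obtain ⟨E2, h2⟩ := derivP_odd t ht
      have hCpeq : Cp = P (t + n) + P t + 2 * (P (t + n) * E1 + P t * E2) := by
        rw [hCp, h1, h2]; ring
      rw [hCpeq, map_add, map_add, map_mul, hχ2, zero_mul, add_zero, hPtn, ← two_mul,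
        hk2, zero_mul]
  have hfin := hχ0 _ hC0
  rw [map_add, map_one, hCp0, add_zero] at hfin
  exact one_ne_zero hfin

lemma sq_cases {x y : ℂ} (h : x ^ 2 = y ^ 2) : x = y ∨ x = -y := by
  have h0 : (x - y) * (x + y) = 0 := by linear_combination h
  rcases mul_eq_zero.mp h0 with h' | h'
  · left; exact sub_eq_zero.mp h'
  · right; exact eq_neg_of_add_eq_zero_left h'

lemma two_mul_eq_zero {x : ℂ} (h : x = -x) : x = 0 := by
  have h2 : (2 : ℂ) * x = 0 := by linear_combination h
  rcases mul_eq_zero.mp h2 with h' | h'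
  · norm_num at h'
  · exact h'

lemma mis_simple (l n j k : ℕ) (hn : 1 ≤ n) (hk : k ∣ n)
    (hj2 : 2 ≤ j) (hjl : j ≤ l) (r : ℂ) (hr : r ∈ mis j k) :
    (qC l n).rootMultiplicity r = 1 := by
  obtain ⟨hq1, hq2, hq3⟩ := hr
  have hk0 : 0 < k := by
    rcases Nat.eq_zero_or_pos k with h | h
    · subst h; rw [Nat.zero_dvd] at hk; omega
    · exact h
  obtain ⟨c, hc⟩ : ∃ c, n = c * k := ⟨n / k, (Nat.div_mul_cancel hk).symm⟩
  have hc1 : 1 ≤ c := by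
    rcases Nat.eq_zero_or_pos c with h | h
    · subst h; omega
    · exact h
  -- translate to the orbit
  have h1' : av r (j + k) = av r j := by
    have := hq1; rw [qC_eval] at this; exact sub_eq_zero.mp this
  have h2' : av r (j - 1 + k) ≠ av r (j - 1) := by
    have := hq2; rw [qC_eval] at this; exact fun hh => this (by rw [hh, sub_self])
  have hper : ∀ i, j ≤ i → av r (i + k) = av r i := seq_propagate (av_step r) h1'
  have hflip : av r (j - 1 + k) = -av r (j - 1) := by
    have e1 : av r (j - 1 + k + 1) = av r (j - 1 + k) ^ 2 + r := av_step r _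
    have e2 : av r (j - 1 + 1) = av r (j - 1) ^ 2 + r := av_step r _
    have hi1 : j - 1 + k + 1 = j + k := by omega
    have hi2 : j - 1 + 1 = j := by omega
    rw [hi1] at e1; rw [hi2] at e2
    have hsq : av r (j - 1 + k) ^ 2 = av r (j - 1) ^ 2 := by
      have := h1'; rw [e1, e2] at this
      linear_combination this
    rcases sq_cases hsq with h | h
    · exact absurd h h2'
    · exact h
  -- r is a root of qC l n
  have hav : av r (l + n) = av r l := by
    have := seq_iter hper c l hjl
    rw [← hc] at this; exact this
  have hroot : (qC l n).eval r = 0 := by rw [qC_eval, hav, sub_self]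
  -- r is an algebraic integer
  have haeval : (Polynomial.aeval r) (Q l n) = 0 := by
    rw [aeval_eq_eval_map]; exact hroot
  have hrint : IsIntegral ℤ r := by
    refine ⟨Q l n, Q_monic l n hn, ?_⟩
    rw [← Polynomial.aeval_def]; exact haeval
  have hrel : (Polynomial.aeval r) (P (l + n)) = (Polynomial.aeval r) (P l) := by
    rw [aeval_eq_eval_map, aeval_eq_eval_map]
    exact hav
  -- the factor pC n does not vanish at r
  have hpn : (pC n).eval r ≠ 0 := by
    intro h
    have h0 : av r (0 + n) = av r 0 := by
      rw [Nat.zero_add, av_zero]; exact h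
    have hper0 : ∀ i, 0 ≤ i → av r (i + n) = av r i := seq_propagate (av_step r) h0
    have hall : ∀ i, 0 ≤ i → av r (i + k) = av r i := seq_pull hn hper hper0
    exact h2' (hall (j - 1) (Nat.zero_le _))
  -- the other factors do not vanish at r
  have hfac : ∀ i ∈ (Finset.range l).erase (j - 1), (pC (i + n) + pC i).eval r ≠ 0 := by
    intro i hi
    obtain ⟨hine, hirange⟩ := Finset.mem_erase.mp hi
    intro hzero
    have hneg : av r (i + n) = -av r i := by
      have : av r (i + n) + av r i = 0 := by
        simpa [av] using hzero
      exact eq_neg_of_add_eq_zero_left this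
    rcases le_or_gt j i with hij | hij
    · -- i ≥ j
      have hin : av r (i + n) = av r i := by
        have := seq_iter hper c i hij
        rw [← hc] at this; exact this
      have hx0 : av r i = 0 := two_mul_eq_zero (hin.symm.trans hneg)
      have h0 : av r (0 + i) = av r 0 := by rw [Nat.zero_add, av_zero]; exact hx0
      have hperi : ∀ m, 0 ≤ m → av r (m + i) = av r m := seq_propagate (av_step r) h0
      have hall : ∀ m, 0 ≤ m → av r (m + k) = av r m := seq_pull (by omega) hper hperi
      exact h2' (hall (j - 1) (Nat.zero_le _))
    · -- i < j, i ≠ j - 1, so i + 1 ≤ j - 1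
      have hle : i + 1 ≤ j - 1 := by omega
      have hA : av r ((i + 1) + n) = av r (i + 1) := by
        have e1 : av r (i + n + 1) = av r (i + n) ^ 2 + r := av_step r _
        have e2 : av r (i + 1) = av r i ^ 2 + r := av_step r _
        have hi1 : i + 1 + n = i + n + 1 := by omega
        rw [hi1, e1, e2, hneg]
        ring
      have hperI : ∀ m, i + 1 ≤ m → av r (m + n) = av r m := seq_propagate (av_step r) hA
      have hall : ∀ m, i + 1 ≤ m → av r (m + k) = av r m := seq_pull hn hper hperI
      exact h2' (hall (j - 1) hle)
  -- the factor at j - 1 vanishes to order exactly 1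
  have hgroot : (pC (j - 1 + n) + pC (j - 1)).eval r = 0 := by
    have hstep : av r (j - 1 + n) = av r (j - 1 + k) := by
      obtain ⟨c', rfl⟩ : ∃ c', c = c' + 1 := ⟨c - 1, by omega⟩
      have := seq_iter hper c' (j - 1 + k) (by omega)
      have hidx : j - 1 + k + c' * k = j - 1 + n := by rw [hc]; ring
      rw [hidx] at this; exact this
    have : av r (j - 1 + n) + av r (j - 1) = 0 := by
      rw [hstep, hflip]; ring
    simpa [av] using this
  have hgderiv : (derivative (pC (j - 1 + n) + pC (j - 1))).eval r ≠ 0 := by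
    have hd1 : derivative (pC (j - 1 + n)) = (derivative (P (j - 1 + n))).map (Int.castRingHom ℂ) :=
      derivative_map _ _
    have hd2 : derivative (pC (j - 1)) = (derivative (P (j - 1))).map (Int.castRingHom ℂ) :=
      derivative_map _ _
    rw [derivative_add, hd1, hd2, ← Polynomial.map_add]
    rw [← aeval_eq_eval_map]
    have hidx1 : j - 1 + n = (j - 2) + 1 + n := by omega
    have hidx2 : j - 1 = (j - 2) + 1 := by omega
    rw [hidx1, hidx2]
    exact deriv_factor_ne_zero l n (j - 2) hrint hrel
  -- assemble
  have hmem : j - 1 ∈ Finset.range l := Finset.mem_range.mpr (by omega)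
  set A : Polynomial ℂ :=
    pC n * ∏ i ∈ (Finset.range l).erase (j - 1), (pC (i + n) + pC i) with hA
  set g : Polynomial ℂ := pC (j - 1 + n) + pC (j - 1) with hg
  have hfacteq : qC l n = A * g := by
    rw [qC_fact, hA, hg, ← Finset.mul_prod_erase (Finset.range l) _ hmem]
    ring
  have hAne : A.eval r ≠ 0 := by
    rw [hA, eval_mul, eval_prod]
    exact mul_ne_zero hpn (Finset.prod_ne_zero_iff.mpr hfac)
  have hgne : g ≠ 0 := by
    intro h
    rw [hg] at h
    exact hgderiv (by rw [hg, h, derivative_zero, eval_zero])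
  have hprodne : A * g ≠ 0 := by rw [← hfacteq]; exact qC_ne_zero l n hn
  rw [hfacteq, Polynomial.rootMultiplicity_mul hprodne]
  have hA0 : rootMultiplicity r A = 0 := rootMultiplicity_eq_zero hAne
  have hg1 : rootMultiplicity r g = 1 := by
    have hpos : 0 < rootMultiplicity r g := (rootMultiplicity_pos hgne).mpr hgroot
    have hnotlt : ¬ 1 < rootMultiplicity r g := by
      intro hlt
      exact hgderiv ((one_lt_rootMultiplicity_iff_isRoot hgne).mp hlt).2
    omega
  omega

lemma classify (l n : ℕ) (hl : 2 ≤ l) (hn : 1 ≤ n) (r : ℂ) (h : (qC l n).eval r = 0) :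
    (∃ k : ℕ, k ∣ n ∧ r ∈ hyp k) ∨
    (∃ j k : ℕ, 2 ≤ j ∧ j ≤ l ∧ k ∣ n ∧ r ∈ mis j k) := by
  classical
  have hav : av r (l + n) = av r l := by
    rw [qC_eval] at h; exact sub_eq_zero.mp h
  have hEx : ∃ s : ℕ, 0 < s ∧ ∃ m, av r (m + s) = av r m := ⟨n, hn, l, hav⟩
  set k := Nat.find hEx with hkdef
  obtain ⟨hk0, m0, hm0⟩ := Nat.find_spec hEx
  have hkmin : ∀ s, s < k → ¬ (0 < s ∧ ∃ m, av r (m + s) = av r m) :=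
    fun s hs => Nat.find_min hEx hs
  have hper0 : ∀ i, m0 ≤ i → av r (i + k) = av r i := seq_propagate (av_step r) hm0
  have hpernl : ∀ i, l ≤ i → av r (i + n) = av r i := seq_propagate (av_step r) hav
  -- k divides n
  have hdvd : k ∣ n := by
    by_contra hnd
    have hrempos : 0 < n % k := by
      rcases Nat.eq_zero_or_pos (n % k) with h' | h'
      · exact absurd (Nat.dvd_of_mod_eq_zero h') hnd
      · exact h'
    obtain ⟨q, rem, hq, hrem0, hremlt⟩ : ∃ q rem, n = k * q + rem ∧ 0 < rem ∧ rem < k :=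
      ⟨n / k, n % k, (Nat.div_add_mod n k).symm, hrempos, Nat.mod_lt _ hk0⟩
    refine hkmin rem hremlt ⟨hrem0, max l m0, ?_⟩
    have h1 : av r (max l m0 + rem + q * k) = av r (max l m0 + rem) :=
      seq_iter hper0 q _ (by omega)
    have hidx : max l m0 + rem + q * k = max l m0 + n := by rw [hq]; ring
    rw [hidx] at h1
    have h2 : av r (max l m0 + n) = av r (max l m0) := hpernl _ (le_max_left _ _)
    rw [h2] at h1
    exact h1.symm
  -- minimal preperiod
  have hEx2 : ∃ m, av r (m + k) = av r m := ⟨m0, hm0⟩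
  set j := Nat.find hEx2 with hjdef
  have hj : av r (j + k) = av r j := Nat.find_spec hEx2
  have hjmin : ∀ m, m < j → av r (m + k) ≠ av r m := fun m hm => Nat.find_min hEx2 hm
  have hperj : ∀ i, j ≤ i → av r (i + k) = av r i := seq_propagate (av_step r) hj
  have hjl : j ≤ l := by
    have hall : ∀ i, l ≤ i → av r (i + k) = av r i := seq_pull hn hperj hpernl
    exact Nat.find_min' hEx2 (hall l le_rfl)
  rcases Nat.eq_zero_or_pos j with hj0 | hj1
  · -- hyperbolic case
    left
    refine ⟨k, hdvd, ?_, ?_⟩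
    · show (pC k).eval r = 0
      have := hj; rw [hj0, Nat.zero_add, av_zero] at this
      exact this
    · intro k' hk'dvd hk'ne heval
      have hk'0 : 0 < k' := by
        rcases Nat.eq_zero_or_pos k' with h' | h'
        · subst h'; rw [Nat.zero_dvd] at hk'dvd; omega
        · exact h'
      have hk'lt : k' < k := lt_of_le_of_ne (Nat.le_of_dvd hk0 hk'dvd) hk'ne
      exact hkmin k' hk'lt ⟨hk'0, 0, by rw [Nat.zero_add, av_zero]; exact heval⟩
  · -- Misiurewicz case
    have hj2 : 2 ≤ j := by
      by_contra hlt
      have hj1' : j = 1 := by omega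
      have e1 : av r (k + 1) = av r k ^ 2 + r := av_step r _
      have e2 : av r 1 = av r 0 ^ 2 + r := av_step r _
      have hjj : av r (1 + k) = av r 1 := by rw [← hj1']; exact hj
      have hsq : av r k ^ 2 = av r 0 ^ 2 := by
        have : av r (1 + k) = av r (k + 1) := by rw [Nat.add_comm]
        rw [this, e1, e2] at hjj
        linear_combination hjj
      have hk00 : av r k = 0 := by
        rcases sq_cases hsq with h' | h' <;> rw [av_zero] at h' <;> simpa using h'
      refine hjmin 0 (by omega) ?_
      rw [Nat.zero_add, av_zero]
      exact hk00
    right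
    refine ⟨j, k, hj2, hjl, hdvd, ?_, ?_, ?_⟩
    · show (qC j k).eval r = 0
      rw [qC_eval, hj, sub_self]
    · show (qC (j - 1) k).eval r ≠ 0
      rw [qC_eval]
      intro hc
      exact hjmin (j - 1) (by omega) (sub_eq_zero.mp hc)
    · intro k' hk'dvd hk'ne heval
      rw [qC_eval] at heval
      have hk'0 : 0 < k' := by
        rcases Nat.eq_zero_or_pos k' with h' | h'
        · subst h'; rw [Nat.zero_dvd] at hk'dvd; omega
        · exact h'
      have hk'lt : k' < k := lt_of_le_of_ne (Nat.le_of_dvd hk0 hk'dvd) hk'ne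
      exact hkmin k' hk'lt ⟨hk'0, j, sub_eq_zero.mp heval⟩

/-- Misiurewicz points of type `(j, k)` with `2 ≤ j ≤ l` and `k ∣ n` are simple roots of
`q l n`, and every complex root of `q l n` is either a hyperbolic point of order some
divisor of `n` or a Misiurewicz point of some type `(j, k)` with `2 ≤ j ≤ l`, `k ∣ n`. -/
theorem mis_simple_roots_and_root_classification (l n : ℕ) (hl : 2 ≤ l) (hn : 1 ≤ n) :
    (∀ k : ℕ, k ∣ n → ∀ j : ℕ, 2 ≤ j → j ≤ l → ∀ r ∈ mis j k,
      (qC l n).rootMultiplicity r = 1) ∧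
    (∀ r : ℂ, (qC l n).eval r = 0 →
      (∃ k : ℕ, k ∣ n ∧ r ∈ hyp k) ∨
      (∃ j k : ℕ, 2 ≤ j ∧ j ≤ l ∧ k ∣ n ∧ r ∈ mis j k)) := by
  refine ⟨fun k hk j hj2 hjl r hr => mis_simple l n j k hn hk hj2 hjl r hr,
    fun r hr => classify l n hl hn r hr⟩
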